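/- arXiv:1805.03145 — 2 statements merged into one kernel-verified Lean document; each statement's English description precedes it below -/
import Mathlib

section
/- Let ℓ > 0, κ > 0 with sin(κℓ/3) ≠ 0 and cos(κℓ/6) ≠ 0, and σ ∈ ℝ. Set a = 1/sin(κℓ/3) and b = 1/cos(κℓ/6), and define u on [0,ℓ/2] by u(x) = a·sin(κx) for 0 ≤ x ≤ ℓ/3 and u(x) = b·cos(κ(ℓ/2 − x)) for ℓ/3 ≤ x ≤ ℓ/2. Then u is continuous with u(0) = 0 and u(ℓ/3) = 1, satisfies u'' + κ²u = 0 on (0,ℓ/3) and on (ℓ/3,ℓ/2), and the one-sided derivatives at ℓ/3 satisfy the jump condition u'(ℓ/3⁺) − u'(ℓ/3⁻) = σ·u(ℓ/3) if and only if σ = κ·(tan(κℓ/6) − cot(κℓ/3)). -/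
open Set Real Filter Topology

/-! Both pieces solve `u'' + κ²u = 0`, and `a`, `b` are chosen so that both equal `1` at `ℓ/3`.
The one-sided derivatives at `ℓ/3` are `b κ sin(κℓ/6) = κ tan(κℓ/6)` from the right and
`a κ cos(κℓ/3) = κ cot(κℓ/3)` from the left, so the jump condition says exactly
`σ = κ (tan(κℓ/6) - cot(κℓ/3))`. -/

section Sinusoid

variable (a κ c x : ℝ)

lemma hasDerivAt_const_mul_sin_mul :
    HasDerivAt (fun x => a * sin (κ * x)) (a * κ * cos (κ * x)) x :=
  (((hasDerivAt_sin _).comp x ((hasDerivAt_id' x).const_mul κ)).const_mul a).congr_deriv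
    (by ring)

lemma hasDerivAt_const_mul_cos_mul :
    HasDerivAt (fun x => a * cos (κ * x)) (-(a * κ * sin (κ * x))) x :=
  (((hasDerivAt_cos _).comp x ((hasDerivAt_id' x).const_mul κ)).const_mul a).congr_deriv
    (by ring)

lemma hasDerivAt_const_mul_cos_mul_sub :
    HasDerivAt (fun x => a * cos (κ * (c - x))) (a * κ * sin (κ * (c - x))) x :=
  (((hasDerivAt_cos _).comp x
    (((hasDerivAt_id' x).const_sub c).const_mul κ)).const_mul a).congr_deriv
    (by ring)

lemma hasDerivAt_const_mul_sin_mul_sub :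
    HasDerivAt (fun x => a * sin (κ * (c - x))) (-(a * κ * cos (κ * (c - x)))) x :=
  (((hasDerivAt_sin _).comp x
    (((hasDerivAt_id' x).const_sub c).const_mul κ)).const_mul a).congr_deriv
    (by ring)

end Sinusoid

lemma deriv_deriv_add_sq_mul_eq_zero_of_eventuallyEq {u f f' : ℝ → ℝ} {κ x : ℝ}
    (hu : u =ᶠ[𝓝 x] f) (hf : ∀ y, HasDerivAt f (f' y) y)
    (hf' : HasDerivAt f' (-(κ ^ 2 * f x)) x) :
    deriv (deriv u) x + κ ^ 2 * u x = 0 := by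
  have hderiv : deriv f = f' := funext fun y => (hf y).deriv
  rw [hu.deriv.deriv_eq, hderiv, hf'.deriv, hu.eq_of_nhds]
  ring

lemma derivWithin_Ici_eq_of_eqOn {u f : ℝ → ℝ} {c d f' : ℝ} (hcd : c < d)
    (hu : EqOn u f (Icc c d)) (hf : HasDerivAt f f' c) :
    derivWithin u (Ici c) c = f' :=
  (hf.hasDerivWithinAt.congr_of_eventuallyEq
    (mem_of_superset (Icc_mem_nhdsGE hcd) hu) (hu ⟨le_rfl, hcd.le⟩)).derivWithin
    (uniqueDiffWithinAt_Ici c)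

lemma derivWithin_Iic_eq_of_eqOn {u f : ℝ → ℝ} {c d f' : ℝ} (hdc : d < c)
    (hu : EqOn u f (Icc d c)) (hf : HasDerivAt f f' c) :
    derivWithin u (Iic c) c = f' :=
  (hf.hasDerivWithinAt.congr_of_eventuallyEq
    (mem_of_superset (Icc_mem_nhdsLE hdc) hu) (hu ⟨hdc.le, le_rfl⟩)).derivWithin
    (uniqueDiffWithinAt_Iic c)

theorem jump_condition_symmetric_third_eigenfunction_general
    (ℓ κ σ : ℝ) (hℓ : 0 < ℓ)
    (hsin : Real.sin (κ * ℓ / 3) ≠ 0)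
    (a b : ℝ) (ha : a = 1 / Real.sin (κ * ℓ / 3)) (hb : b = 1 / Real.cos (κ * ℓ / 6))
    (u : ℝ → ℝ)
    (hu1 : ∀ x : ℝ, 0 ≤ x → x ≤ ℓ / 3 → u x = a * Real.sin (κ * x))
    (hu2 : ∀ x : ℝ, ℓ / 3 ≤ x → x ≤ ℓ / 2 → u x = b * Real.cos (κ * (ℓ / 2 - x))) :
    ContinuousOn u (Set.Icc 0 (ℓ / 2)) ∧ u 0 = 0 ∧ u (ℓ / 3) = 1 ∧
    (∀ x ∈ Set.Ioo 0 (ℓ / 3), deriv (deriv u) x + κ ^ 2 * u x = 0) ∧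
    (∀ x ∈ Set.Ioo (ℓ / 3) (ℓ / 2), deriv (deriv u) x + κ ^ 2 * u x = 0) ∧
    (derivWithin u (Set.Ici (ℓ / 3)) (ℓ / 3) - derivWithin u (Set.Iic (ℓ / 3)) (ℓ / 3)
        = σ * u (ℓ / 3)
      ↔ σ = κ * (Real.tan (κ * ℓ / 6) - Real.cot (κ * ℓ / 3))) := by
  have h03 : 0 < ℓ / 3 := by linarith
  have h32 : ℓ / 3 < ℓ / 2 := by linarith
  have hu_left : EqOn u (fun x => a * sin (κ * x)) (Icc 0 (ℓ / 3)) :=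
    fun x hx => hu1 x hx.1 hx.2
  have hu_right : EqOn u (fun x => b * cos (κ * (ℓ / 2 - x))) (Icc (ℓ / 3) (ℓ / 2)) :=
    fun x hx => hu2 x hx.1 hx.2
  have hu_third : u (ℓ / 3) = 1 := by
    rw [hu1 _ h03.le le_rfl, ha, mul_div_assoc', one_div_mul_cancel hsin]
  have hjump : derivWithin u (Ici (ℓ / 3)) (ℓ / 3) - derivWithin u (Iic (ℓ / 3)) (ℓ / 3)
      = κ * (tan (κ * ℓ / 6) - cot (κ * ℓ / 3)) := by
    rw [derivWithin_Ici_eq_of_eqOn h32 hu_right (hasDerivAt_const_mul_cos_mul_sub _ _ _ _),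
      derivWithin_Iic_eq_of_eqOn h03 hu_left (hasDerivAt_const_mul_sin_mul _ _ _),
      show κ * (ℓ / 2 - ℓ / 3) = κ * ℓ / 6 by ring,
      show κ * (ℓ / 3) = κ * ℓ / 3 by ring,
      tan_eq_sin_div_cos, cot_eq_cos_div_sin, ha, hb]
    ring
  refine ⟨?_, by simp [hu1 0 le_rfl h03.le], hu_third, fun x hx => ?_, fun x hx => ?_, ?_⟩
  · rw [← Icc_union_Icc_eq_Icc h03.le h32.le]
    exact (ContinuousOn.congr (by fun_prop) hu_left).union_of_isClosed
      (ContinuousOn.congr (by fun_prop) hu_right) isClosed_Icc isClosed_Icc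
  · exact deriv_deriv_add_sq_mul_eq_zero_of_eventuallyEq
      (mem_of_superset (Ioo_mem_nhds hx.1 hx.2) (hu_left.mono Ioo_subset_Icc_self))
      (hasDerivAt_const_mul_sin_mul a κ)
      ((hasDerivAt_const_mul_cos_mul _ κ x).congr_deriv (by ring))
  · exact deriv_deriv_add_sq_mul_eq_zero_of_eventuallyEq
      (mem_of_superset (Ioo_mem_nhds hx.1 hx.2) (hu_right.mono Ioo_subset_Icc_self))
      (hasDerivAt_const_mul_cos_mul_sub b κ _)
      ((hasDerivAt_const_mul_sin_mul_sub _ κ _ x).congr_deriv (by ring))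
  · rw [hjump, hu_third, mul_one, eq_comm]

/-- For `a = 1/sin(κℓ/3)`, `b = 1/cos(κℓ/6)`, and `u(x) = a·sin(κx)` on `[0, ℓ/3]`,
`u(x) = b·cos(κ(ℓ/2 − x))` on `[ℓ/3, ℓ/2]`: `u` is continuous with `u(0) = 0` and
`u(ℓ/3) = 1`, satisfies `u'' + κ²u = 0` on `(0, ℓ/3)` and on `(ℓ/3, ℓ/2)`, and the
one-sided derivatives at `ℓ/3` satisfy `u'(ℓ/3⁺) − u'(ℓ/3⁻) = σ·u(ℓ/3)` if and
only if `σ = κ·(tan(κℓ/6) − cot(κℓ/3))`. -/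
theorem jump_condition_symmetric_third_eigenfunction
    (ℓ κ σ : ℝ) (hℓ : 0 < ℓ) (hκ : 0 < κ)
    (hsin : Real.sin (κ * ℓ / 3) ≠ 0) (hcos : Real.cos (κ * ℓ / 6) ≠ 0)
    (a b : ℝ) (ha : a = 1 / Real.sin (κ * ℓ / 3)) (hb : b = 1 / Real.cos (κ * ℓ / 6))
    (u : ℝ → ℝ)
    (hu1 : ∀ x : ℝ, 0 ≤ x → x ≤ ℓ / 3 → u x = a * Real.sin (κ * x))
    (hu2 : ∀ x : ℝ, ℓ / 3 ≤ x → x ≤ ℓ / 2 → u x = b * Real.cos (κ * (ℓ / 2 - x))) :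
    ContinuousOn u (Set.Icc 0 (ℓ / 2)) ∧ u 0 = 0 ∧ u (ℓ / 3) = 1 ∧
    (∀ x ∈ Set.Ioo 0 (ℓ / 3), deriv (deriv u) x + κ ^ 2 * u x = 0) ∧
    (∀ x ∈ Set.Ioo (ℓ / 3) (ℓ / 2), deriv (deriv u) x + κ ^ 2 * u x = 0) ∧
    (derivWithin u (Set.Ici (ℓ / 3)) (ℓ / 3) - derivWithin u (Set.Iic (ℓ / 3)) (ℓ / 3)
        = σ * u (ℓ / 3)
      ↔ σ = κ * (Real.tan (κ * ℓ / 6) - Real.cot (κ * ℓ / 3))) :=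
  jump_condition_symmetric_third_eigenfunction_general ℓ κ σ hℓ hsin a b ha hb u hu1 hu2
end

section
/- Let ℓ > 0, κ > 0 with sin(κℓ/3) ≠ 0 and sin(κℓ/6) ≠ 0, and σ ∈ ℝ. Set a = 1/sin(κℓ/3) and b = 1/sin(κℓ/6), and define u on [0,ℓ/2] by u(x) = a·sin(κx) for 0 ≤ x ≤ ℓ/3 and u(x) = b·sin(κ(ℓ/2 − x)) for ℓ/3 ≤ x ≤ ℓ/2. Then u is continuous with u(0) = 0, u(ℓ/3) = 1 and u(ℓ/2) = 0, satisfies u'' + κ²u = 0 on (0,ℓ/3) and on (ℓ/3,ℓ/2), and the one-sided derivatives at ℓ/3 satisfy the jump condition u'(ℓ/3⁺) − u'(ℓ/3⁻) = σ·u(ℓ/3) if and only if σ = −κ·(cot(κℓ/3) + cot(κℓ/6)). -/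
/-! Each piece of `u` is `y ↦ A sin(p y + q)` with `p = ±κ`, so it solves `f'' = -κ² f`, and near
`ℓ/3` the one-sided derivatives of `u` are those of the pieces. The normalisations
`a = 1/sin(κℓ/3)` and `b = 1/sin(κℓ/6)` make `u(ℓ/3) = 1` and turn the two slopes at `ℓ/3` into
`κ cot(κℓ/3)` and `-κ cot(κℓ/6)`, so the jump of `u'` is `-κ (cot(κℓ/3) + cot(κℓ/6)) · u(ℓ/3)`. -/

open Set

namespace Real

variable (A p q : ℝ)

theorem hasDerivAt_const_mul_sin_affine (x : ℝ) :
    HasDerivAt (fun y => A * sin (p * y + q)) (A * p * cos (p * x + q)) x :=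
  ((((hasDerivAt_id' x).const_mul p).add_const q).sin.const_mul A).congr_deriv (by ring)

theorem deriv_deriv_const_mul_sin_affine (x : ℝ) :
    deriv (deriv fun y => A * sin (p * y + q)) x = -p ^ 2 * (A * sin (p * x + q)) := by
  have hderiv : deriv (fun y => A * sin (p * y + q)) = fun y => A * p * cos (p * y + q) :=
    funext fun y => (hasDerivAt_const_mul_sin_affine A p q y).deriv
  rw [hderiv, ((((hasDerivAt_id' x).const_mul p).add_const q).cos.const_mul (A * p)).deriv]
  ring

variable {A p q}

theorem deriv_deriv_add_sq_mul_eq_zero_of_eqOn {u : ℝ → ℝ} {s : Set ℝ} {x : ℝ} (hs : IsOpen s)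
    (hu : EqOn u (fun y => A * sin (p * y + q)) s) (hx : x ∈ s) :
    deriv (deriv u) x + p ^ 2 * u x = 0 := by
  rw [(hu.eventuallyEq_of_mem (hs.mem_nhds hx)).deriv.deriv_eq,
    deriv_deriv_const_mul_sin_affine, hu hx]
  ring

end Real

section OneSided

variable {u f : ℝ → ℝ} {f' a b : ℝ}

theorem derivWithin_Ici_eq_of_eqOn_Icc (hab : a < b) (hu : EqOn u f (Icc a b))
    (hf : HasDerivAt f f' a) : derivWithin u (Ici a) a = f' :=
  (hf.hasDerivWithinAt.congr_of_eventuallyEq (hu.eventuallyEq_of_mem (Icc_mem_nhdsGE hab))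
    (hu ⟨le_rfl, hab.le⟩)).derivWithin (uniqueDiffWithinAt_Ici a)

theorem derivWithin_Iic_eq_of_eqOn_Icc (hab : a < b) (hu : EqOn u f (Icc a b))
    (hf : HasDerivAt f f' b) : derivWithin u (Iic b) b = f' :=
  (hf.hasDerivWithinAt.congr_of_eventuallyEq (hu.eventuallyEq_of_mem (Icc_mem_nhdsLE hab))
    (hu ⟨hab.le, le_rfl⟩)).derivWithin (uniqueDiffWithinAt_Iic b)

end OneSided

theorem jump_condition_antisymmetric_third_eigenfunction_general
    (ℓ κ σ : ℝ) (hℓ : 0 < ℓ)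
    (hsin3 : Real.sin (κ * ℓ / 3) ≠ 0)
    (a b : ℝ) (ha : a = 1 / Real.sin (κ * ℓ / 3)) (hb : b = 1 / Real.sin (κ * ℓ / 6))
    (u : ℝ → ℝ)
    (hu1 : ∀ x : ℝ, 0 ≤ x → x ≤ ℓ / 3 → u x = a * Real.sin (κ * x))
    (hu2 : ∀ x : ℝ, ℓ / 3 ≤ x → x ≤ ℓ / 2 → u x = b * Real.sin (κ * (ℓ / 2 - x))) :
    ContinuousOn u (Set.Icc 0 (ℓ / 2)) ∧ u 0 = 0 ∧ u (ℓ / 3) = 1 ∧ u (ℓ / 2) = 0 ∧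
    (∀ x ∈ Set.Ioo 0 (ℓ / 3), deriv (deriv u) x + κ ^ 2 * u x = 0) ∧
    (∀ x ∈ Set.Ioo (ℓ / 3) (ℓ / 2), deriv (deriv u) x + κ ^ 2 * u x = 0) ∧
    (derivWithin u (Set.Ici (ℓ / 3)) (ℓ / 3) - derivWithin u (Set.Iic (ℓ / 3)) (ℓ / 3)
        = σ * u (ℓ / 3)
      ↔ σ = -κ * (Real.cot (κ * ℓ / 3) + Real.cot (κ * ℓ / 6))) := by
  have h3 : 0 < ℓ / 3 := by positivity
  have h32 : ℓ / 3 < ℓ / 2 := by linarith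
  have hleft : EqOn u (fun y => a * Real.sin (κ * y + 0)) (Icc 0 (ℓ / 3)) := fun x hx => by
    simp only [add_zero, hu1 x hx.1 hx.2]
  have hright : EqOn u (fun y => b * Real.sin (-κ * y + κ * (ℓ / 2))) (Icc (ℓ / 3) (ℓ / 2)) :=
    fun x hx => by rw [hu2 x hx.1 hx.2]; ring_nf
  have hu3 : u (ℓ / 3) = 1 := by
    rw [hu1 _ h3.le le_rfl, ha, mul_div_assoc', one_div_mul_eq_div, div_self hsin3]
  have hjump : derivWithin u (Ici (ℓ / 3)) (ℓ / 3) - derivWithin u (Iic (ℓ / 3)) (ℓ / 3)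
      = -κ * (Real.cot (κ * ℓ / 3) + Real.cot (κ * ℓ / 6)) := by
    rw [derivWithin_Ici_eq_of_eqOn_Icc h32 hright (Real.hasDerivAt_const_mul_sin_affine _ _ _ _),
      derivWithin_Iic_eq_of_eqOn_Icc h3 hleft (Real.hasDerivAt_const_mul_sin_affine _ _ _ _),
      ha, hb, Real.cot_eq_cos_div_sin, Real.cot_eq_cos_div_sin]
    ring_nf
  refine ⟨?_, by simp [hu1 0 le_rfl h3.le], hu3, by simp [hu2 _ h32.le le_rfl],
    fun x hx => Real.deriv_deriv_add_sq_mul_eq_zero_of_eqOn isOpen_Ioo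
      (hleft.mono Ioo_subset_Icc_self) hx,
    fun x hx => by
      simpa only [neg_sq] using Real.deriv_deriv_add_sq_mul_eq_zero_of_eqOn isOpen_Ioo
        (hright.mono Ioo_subset_Icc_self) hx,
    by rw [hjump, hu3, mul_one, eq_comm]⟩
  rw [← Icc_union_Icc_eq_Icc h3.le h32.le]
  exact ((by fun_prop : Continuous _).continuousOn.congr hleft).union_of_isClosed
    ((by fun_prop : Continuous _).continuousOn.congr hright) isClosed_Icc isClosed_Icc

/-- For `a = 1/sin(κℓ/3)`, `b = 1/sin(κℓ/6)`, and `u(x) = a·sin(κx)` on `[0, ℓ/3]`,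
`u(x) = b·sin(κ(ℓ/2 − x))` on `[ℓ/3, ℓ/2]`: `u` is continuous with `u(0) = 0`,
`u(ℓ/3) = 1` and `u(ℓ/2) = 0`, satisfies `u'' + κ²u = 0` on `(0, ℓ/3)` and on
`(ℓ/3, ℓ/2)`, and the one-sided derivatives at `ℓ/3` satisfy
`u'(ℓ/3⁺) − u'(ℓ/3⁻) = σ·u(ℓ/3)` if and only if
`σ = −κ·(cot(κℓ/3) + cot(κℓ/6))`. -/
theorem jump_condition_antisymmetric_third_eigenfunction
    (ℓ κ σ : ℝ) (hℓ : 0 < ℓ) (hκ : 0 < κ)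
    (hsin3 : Real.sin (κ * ℓ / 3) ≠ 0) (hsin6 : Real.sin (κ * ℓ / 6) ≠ 0)
    (a b : ℝ) (ha : a = 1 / Real.sin (κ * ℓ / 3)) (hb : b = 1 / Real.sin (κ * ℓ / 6))
    (u : ℝ → ℝ)
    (hu1 : ∀ x : ℝ, 0 ≤ x → x ≤ ℓ / 3 → u x = a * Real.sin (κ * x))
    (hu2 : ∀ x : ℝ, ℓ / 3 ≤ x → x ≤ ℓ / 2 → u x = b * Real.sin (κ * (ℓ / 2 - x))) :
    ContinuousOn u (Set.Icc 0 (ℓ / 2)) ∧ u 0 = 0 ∧ u (ℓ / 3) = 1 ∧ u (ℓ / 2) = 0 ∧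
    (∀ x ∈ Set.Ioo 0 (ℓ / 3), deriv (deriv u) x + κ ^ 2 * u x = 0) ∧
    (∀ x ∈ Set.Ioo (ℓ / 3) (ℓ / 2), deriv (deriv u) x + κ ^ 2 * u x = 0) ∧
    (derivWithin u (Set.Ici (ℓ / 3)) (ℓ / 3) - derivWithin u (Set.Iic (ℓ / 3)) (ℓ / 3)
        = σ * u (ℓ / 3)
      ↔ σ = -κ * (Real.cot (κ * ℓ / 3) + Real.cot (κ * ℓ / 6))) :=
  jump_condition_antisymmetric_third_eigenfunction_general ℓ κ σ hℓ hsin3 a b ha hb u hu1 hu2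
end
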